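/- C(L_{∞ω}) = V: if first-order logic is replaced by the infinitary logic L_{∞ω} in the definition of Gödel's constructible hierarchy, the resulting inner model is the whole universe V. (The proof in fact shows C(L^ω_{∞ω}) = V, where only finitely many free variables are allowed per formula.) -/

import Mathlib

noncomputable section

open Classical

/-! # Inner models from extended logics: basic framework

We work in the ambient universe `V` of sets, formalized as Mathlib's `ZFSet.{0}`
(the `pSet`-quotient model of ZFC).  An *abstract logic* `ℒ* = (S*, T*)` is
given by a class of formulas together with a satisfaction relation on
membership structures `(M, ∈)` (with `M : ZFSet.{0}`), where assignments
`ℕ → ZFSet.{0}` interpret the (first-order) variables, and satisfaction is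
evaluated in `V`.  Following Kennedy–Magidor–Väänänen, for a logic `ℒ*` the
hierarchy `L'_α` and the inner model `C(ℒ*) = ⋃_α L'_α` are defined by
`L'_0 = ∅`, `L'_{α+1} = Def_{ℒ*}(L'_α)`, and unions at limits. -/

/-- An abstract logic: a class of formulas together with a satisfaction
relation for structures of the form `(M, ∈)`, `M : ZFSet.{0}`, evaluated in `V`. -/
structure AbstractLogic : Type 2 where
  Formula : Type 1
  Sat : ZFSet.{0} → Formula → (ℕ → ZFSet.{0}) → Prop

namespace AbstractLogic

/-- `Def_{ℒ*}(M)`: the set of all subsets of `M` of the form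
`{a ∈ M : (M, ∈) ⊨ φ(a, b⃗)}`, where `φ(x, y⃗)` is a formula of `ℒ*` and
`b⃗ ∈ M` (variable `0` is the distinguished free variable; the default value
`∅` is also allowed, so that no parameters are required). -/
def defSet (L : AbstractLogic) (M : ZFSet.{0}) : ZFSet.{0} :=
  ZFSet.sep
    (fun X => ∃ (φ : L.Formula) (v : ℕ → ZFSet.{0}), (∀ n, v n ∈ M ∨ v n = ∅) ∧
      ∀ a : ZFSet.{0}, a ∈ X ↔ a ∈ M ∧ L.Sat M φ (fun n => Nat.rec a (fun k _ => v k) n))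
    (ZFSet.powerset M)

/-- The hierarchy `L'_α` of sets constructible using `ℒ*`, built over a
base set (`base = ∅` gives the hierarchy of the paper). -/
def hierFrom (L : AbstractLogic) (base : ZFSet.{0}) (α : Ordinal.{0}) : ZFSet.{0} :=
  Ordinal.limitRecOn α base (fun _ ih => L.defSet ih)
    (fun o _ ih =>
      ZFSet.sUnion (ZFSet.range fun i : o.ToType =>
        ih ((Ordinal.ToType.mk (o := o)).symm i).1 ((Ordinal.ToType.mk (o := o)).symm i).2))

/-- The hierarchy `L'_α` of sets constructible using `ℒ*`. -/
def hier (L : AbstractLogic) : Ordinal.{0} → ZFSet.{0} := L.hierFrom ∅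

/-- The inner model `C(ℒ*) = ⋃_{α ∈ On} L'_α`, as a class. -/
def C (L : AbstractLogic) : Set ZFSet.{0} := {x | ∃ α : Ordinal.{0}, x ∈ L.hier α}

/-- Build an abstract logic from a small type of formulas. -/
def ofSmall (F : Type) (S : ZFSet.{0} → F → (ℕ → ZFSet.{0}) → Prop) : AbstractLogic :=
  ⟨ULift.{1} F, fun M φ v => S M φ.down v⟩

end AbstractLogic

/-! ## First-order logic -/

/-- First-order formulas of the language of set theory (variables are
indexed by `ℕ`). -/
inductive FOFormula : Type
  | eq : ℕ → ℕ → FOFormula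
  | mem : ℕ → ℕ → FOFormula
  | neg : FOFormula → FOFormula
  | and : FOFormula → FOFormula → FOFormula
  | ex : ℕ → FOFormula → FOFormula

/-- Satisfaction for first-order formulas in `(M, ∈)`, `M : ZFSet.{0}`. -/
def FOSat (M : ZFSet.{0}) : FOFormula → (ℕ → ZFSet.{0}) → Prop
  | .eq i j, v => v i = v j
  | .mem i j, v => v i ∈ v j
  | .neg φ, v => ¬ FOSat M φ v
  | .and φ ψ, v => FOSat M φ v ∧ FOSat M ψ v
  | .ex i φ, v => ∃ a, a ∈ M ∧ FOSat M φ (Function.update v i a)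

/-- Satisfaction for first-order formulas in a class structure `(D, ∈)`,
`D : Set ZFSet.{0}`. -/
def SatIn (D : Set ZFSet.{0}) : FOFormula → (ℕ → ZFSet.{0}) → Prop
  | .eq i j, v => v i = v j
  | .mem i j, v => v i ∈ v j
  | .neg φ, v => ¬ SatIn D φ v
  | .and φ ψ, v => SatIn D φ v ∧ SatIn D ψ v
  | .ex i φ, v => ∃ a, a ∈ D ∧ SatIn D φ (Function.update v i a)

/-- First-order logic `ℒ_{ωω}` as an abstract logic. -/
def FO : AbstractLogic := AbstractLogic.ofSmall FOFormula FOSat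

/-- Gödel's constructible universe `L = C(ℒ_{ωω})`. -/
def GodelL : Set ZFSet.{0} := FO.C

/-! ## Von Neumann ordinals and basic set-theoretic machinery -/

/-- The von Neumann ordinal corresponding to `o : Ordinal`. -/
def vN (o : Ordinal.{0}) : ZFSet.{0} :=
  ZFSet.range fun i : o.ToType =>
    vN (((Ordinal.ToType.mk (o := o)).symm i : Set.Iio o) : Ordinal.{0})
termination_by o
decreasing_by exact ((Ordinal.ToType.mk (o := o)).symm i).2

/-- `x` is a (von Neumann) ordinal, i.e. a transitive set of transitive sets. -/
def ZOrd (x : ZFSet.{0}) : Prop := x.IsTransitive ∧ ∀ y ∈ x.toSet, ZFSet.IsTransitive y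

/-- Application of a set-coded function `f` to `x`. -/
def zApp (f x : ZFSet.{0}) : ZFSet.{0} :=
  ZFSet.sUnion (ZFSet.sep (fun y => ZFSet.pair x y ∈ f) (ZFSet.sUnion (ZFSet.sUnion f)))

/-- The von Neumann natural number `n` as a `ZFSet.{0}`. -/
def natToZF : ℕ → ZFSet.{0}
  | 0 => ∅
  | n + 1 => insert (natToZF n) (natToZF n)

/-- Iterated unions (towards the transitive closure). -/
def iterUnion (x : ZFSet.{0}) : ℕ → ZFSet.{0}
  | 0 => x
  | n + 1 => ZFSet.sUnion (iterUnion x n)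

/-- The transitive closure of `x` (the set of members, members of members, …). -/
def tcl (x : ZFSet.{0}) : ZFSet.{0} := ZFSet.sUnion (ZFSet.range fun n : ℕ => iterUnion x n)

/-- A class `D` is transitive. -/
def IsTransClass (D : Set ZFSet.{0}) : Prop := ∀ x ∈ D, ∀ y ∈ x.toSet, y ∈ D

/-- `g` is a surjection of `b` onto `x` (as set-coded functions). -/
def SurjFun (b x g : ZFSet.{0}) : Prop :=
  ZFSet.IsFunc b x g ∧ ∀ c ∈ x.toSet, ∃ a ∈ b.toSet, zApp g a = c

/-- `g` is an injection of `b` into `x` (as set-coded functions). -/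
def InjFun (b x g : ZFSet.{0}) : Prop :=
  ZFSet.IsFunc b x g ∧ ∀ a₁ ∈ b.toSet, ∀ a₂ ∈ b.toSet, zApp g a₁ = zApp g a₂ → a₁ = a₂

/-- `D` is a transitive (set or class) model of ZFC, stated semantically:
transitivity, infinity, pairing, union, (relative) power set, the separation
and replacement schemas for first-order formulas (with parameters), and
choice in the form "every set is the surjective image of an ordinal". -/
def ModelsZFC (D : Set ZFSet.{0}) : Prop :=
  IsTransClass D ∧
  ZFSet.omega ∈ D ∧
  (∀ x ∈ D, ∀ y ∈ D, ({x, y} : ZFSet.{0}) ∈ D) ∧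
  (∀ x ∈ D, ZFSet.sUnion x ∈ D) ∧
  (∀ x ∈ D, ZFSet.sep (· ∈ D) (ZFSet.powerset x) ∈ D) ∧
  (∀ (φ : FOFormula) (v : ℕ → ZFSet.{0}), (∀ n, v n ∈ D) → ∀ x ∈ D,
      ZFSet.sep (fun a => SatIn D φ (fun n => Nat.rec a (fun k _ => v k) n)) x ∈ D) ∧
  (∀ (φ : FOFormula) (v : ℕ → ZFSet.{0}), (∀ n, v n ∈ D) → ∀ x ∈ D,
      (∀ a ∈ x.toSet, ∀ b₁ ∈ D, ∀ b₂ ∈ D,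
        SatIn D φ (fun n => Nat.rec a (fun k _ => Nat.rec b₁ (fun m _ => v m) k) n) →
        SatIn D φ (fun n => Nat.rec a (fun k _ => Nat.rec b₂ (fun m _ => v m) k) n) →
        b₁ = b₂) →
      ∃ y ∈ D, ∀ b : ZFSet.{0}, b ∈ y ↔ b ∈ D ∧ ∃ a ∈ x.toSet,
        SatIn D φ (fun n => Nat.rec a (fun k _ => Nat.rec b (fun m _ => v m) k) n)) ∧
  (∀ x ∈ D, ∃ w ∈ D, ∃ g ∈ D, ZOrd w ∧ SurjFun w x g)

/-! ## Linear orders, cofinality (computed in `V`), the cofinality quantifier -/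

/-- `R` is a strict linear order on the class `A`. -/
def IsLinOrdOn (A : Set ZFSet.{0}) (R : ZFSet.{0} → ZFSet.{0} → Prop) : Prop :=
  (∀ a ∈ A, ¬ R a a) ∧
  (∀ a ∈ A, ∀ b ∈ A, ∀ c ∈ A, R a b → R b c → R a c) ∧
  (∀ a ∈ A, ∀ b ∈ A, a ≠ b → R a b ∨ R b a)

/-- `B` is cofinal in `(A, R)`. -/
def IsCofinalIn (A : Set ZFSet.{0}) (R : ZFSet.{0} → ZFSet.{0} → Prop) (B : Set ZFSet.{0}) : Prop :=
  B ⊆ A ∧ ∀ a ∈ A, ∃ b ∈ B, a = b ∨ R a b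

/-- The cofinality, computed in `V`, of the order `(A, R)`: the least
cardinality of a cofinal subset. -/
def cofinalityOf (A : Set ZFSet.{0}) (R : ZFSet.{0} → ZFSet.{0} → Prop) : Cardinal.{1} :=
  sInf {c : Cardinal.{1} | ∃ B : Set ZFSet.{0}, IsCofinalIn A R B ∧ Cardinal.mk B = c}

/-- Formulas of `ℒ(Q^cf)`: first-order logic with the cofinality
quantifier `Q^cf x y φ(x,y)`. -/
inductive QcfFormula : Type
  | eq : ℕ → ℕ → QcfFormula
  | mem : ℕ → ℕ → QcfFormula
  | neg : QcfFormula → QcfFormula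
  | and : QcfFormula → QcfFormula → QcfFormula
  | ex : ℕ → QcfFormula → QcfFormula
  | qcf : ℕ → ℕ → QcfFormula → QcfFormula

/-- Satisfaction for `ℒ(Q^cf)` in `(M, ∈)`.  The parameter `P` is the
condition imposed on the `V`-cofinality of the defined linear order: with
`P = (· = κ)` we obtain the quantifier `Q^cf_κ`, and with `P = (· < κ)`
the quantifier `Q^cf_{<κ}`. -/
def QcfSat (P : Cardinal.{1} → Prop) (M : ZFSet.{0}) : QcfFormula → (ℕ → ZFSet.{0}) → Prop
  | .eq i j, v => v i = v j
  | .mem i j, v => v i ∈ v j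
  | .neg φ, v => ¬ QcfSat P M φ v
  | .and φ ψ, v => QcfSat P M φ v ∧ QcfSat P M ψ v
  | .ex i φ, v => ∃ a, a ∈ M ∧ QcfSat P M φ (Function.update v i a)
  | .qcf i j φ, v =>
      let R : ZFSet.{0} → ZFSet.{0} → Prop := fun c d =>
        c ∈ M ∧ d ∈ M ∧ QcfSat P M φ (Function.update (Function.update v i c) j d)
      IsLinOrdOn {c | ∃ d, R c d ∨ R d c} R ∧
        P (cofinalityOf {c | ∃ d, R c d ∨ R d c} R)

/-- The logic `ℒ(Q^cf_κ)`, where the cofinality quantifier asserts that the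
defined relation is a linear order of `V`-cofinality exactly `κ`. -/
def QcfLogic (κ : Cardinal.{1}) : AbstractLogic :=
  AbstractLogic.ofSmall QcfFormula (QcfSat (· = κ))

/-- The logic `ℒ(Q^cf_{<κ})`. -/
def QcfLtLogic (κ : Cardinal.{1}) : AbstractLogic :=
  AbstractLogic.ofSmall QcfFormula (QcfSat (· < κ))

/-- The inner model `C*_κ = C(ℒ(Q^cf_κ))`. -/
def CstarAt (κ : Cardinal.{0}) : Set ZFSet.{0} := (QcfLogic (Cardinal.lift.{1} κ)).C

/-- The inner model `C* = C(ℒ(Q^cf_ω))`. -/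
def Cstar : Set ZFSet.{0} := CstarAt Cardinal.aleph0

/-- The inner model `C*_{<κ} = C(ℒ(Q^cf_{<κ}))`. -/
def CstarLt (κ : Cardinal.{0}) : Set ZFSet.{0} := (QcfLtLogic (Cardinal.lift.{1} κ)).C

/-! ## Internal (relativized) set-theoretic notions -/

/-- The power set of `x` as computed in the transitive class `D`. -/
def powersetIn (D : Set ZFSet.{0}) (x : ZFSet.{0}) : ZFSet.{0} :=
  ZFSet.sep (· ∈ D) (ZFSet.powerset x)

/-- `x` is a regular limit ordinal from the point of view of the inner model
`D`: no function of `D` from a smaller ordinal into `x` is cofinal. -/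
def IsRegularIn (D : Set ZFSet.{0}) (x : ZFSet.{0}) : Prop :=
  ZOrd x ∧ (∀ y ∈ x.toSet, ∃ z ∈ x.toSet, y ∈ z) ∧
  ∀ g ∈ D, ∀ b ∈ x.toSet, ZFSet.IsFunc b x g →
    ∃ c ∈ x.toSet, ∀ a ∈ b.toSet, zApp g a ∈ c

/-- `x` is a cardinal from the point of view of the inner model `D`. -/
def IsCardinalIn (D : Set ZFSet.{0}) (x : ZFSet.{0}) : Prop :=
  ZOrd x ∧ ∀ g ∈ D, ∀ b ∈ x.toSet, ¬ SurjFun b x g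

/-- `x` is a strong limit from the point of view of `D`. -/
def StrongLimitIn (D : Set ZFSet.{0}) (x : ZFSet.{0}) : Prop :=
  ∀ b ∈ x.toSet, ∃ c ∈ x.toSet, ∃ g ∈ D, InjFun (powersetIn D b) c g

/-- `x` is strongly inaccessible from the point of view of `D`. -/
def StrongInaccessibleIn (D : Set ZFSet.{0}) (x : ZFSet.{0}) : Prop :=
  ZFSet.omega ∈ x ∧ IsRegularIn D x ∧ StrongLimitIn D x

/-- `c` is club (closed unbounded) in the ordinal `bound`. -/
def IsClubIn (c bound : ZFSet.{0}) : Prop :=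
  (∀ d ∈ c.toSet, d ∈ bound) ∧
  (∀ a ∈ bound.toSet, ∃ d ∈ c.toSet, a ∈ d) ∧
  (∀ b ∈ bound.toSet, b ≠ ∅ →
    (∀ a ∈ b.toSet, ∃ d ∈ c.toSet, d ∈ b ∧ (a ∈ d ∨ a = d)) → b ∈ c)

/-! ## Large cardinals (in `V`) -/

/-- `κ` is a measurable cardinal: there is a `κ`-complete nonprincipal
ultrafilter on `κ`. -/
def IsMeasurableCard (κ : Cardinal.{0}) : Prop :=
  Cardinal.aleph0 < κ ∧
  ∃ U : Ultrafilter κ.ord.ToType,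
    (∀ a : κ.ord.ToType, ({a}ᶜ : Set κ.ord.ToType) ∈ U) ∧
    ∀ (ι : Type) (f : ι → Set κ.ord.ToType), Cardinal.mk ι < κ →
      (∀ i, f i ∈ U) → (⋂ i, f i) ∈ U

/-- `j` is an elementary embedding of `V` into the (transitive) class `M`. -/
def ElementaryInto (M : Set ZFSet.{0}) (j : ZFSet.{0} → ZFSet.{0}) : Prop :=
  (∀ x : ZFSet.{0}, j x ∈ M) ∧
  ∀ (φ : FOFormula) (v : ℕ → ZFSet.{0}),
    SatIn Set.univ φ v ↔ SatIn M φ (fun n => j (v n))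

/-- `j` has critical point `κ`. -/
def CritAt (j : ZFSet.{0} → ZFSet.{0}) (κ : Ordinal.{0}) : Prop :=
  (∀ o < κ, j (vN o) = vN o) ∧ j (vN κ) ≠ vN κ

/-- `lam` is a Woodin cardinal: for every `f : lam → lam` there is `κ < lam`
closed under `f` and an elementary embedding `j : V → M` with critical point
`κ` such that `V_{j(f)(κ)} ⊆ M`. -/
def IsVWoodin (lam : Ordinal.{0}) : Prop :=
  ∀ f : ZFSet.{0}, ZFSet.IsFunc (vN lam) (vN lam) f →
    ∃ κ : Ordinal.{0}, κ < lam ∧ (∀ o < κ, zApp f (vN o) ∈ vN κ) ∧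
      ∃ (M : Set ZFSet.{0}) (j : ZFSet.{0} → ZFSet.{0}),
        IsTransClass M ∧ ElementaryInto M j ∧ CritAt j κ ∧
        ∀ x : ZFSet.{0}, x.rank < (zApp (j f) (vN κ)).rank → x ∈ M


/-! ## The infinitary logic `ℒ_{∞ω}` -/

/-- Formulas of `ℒ_{∞ω}`: set-sized conjunctions (indexed by arbitrary small
types, i.e. by arbitrary sets) together with negation and finite strings of
quantifiers. -/
inductive InfFormula : Type 1
  | eq : ℕ → ℕ → InfFormula
  | mem : ℕ → ℕ → InfFormula
  | neg : InfFormula → InfFormula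
  | conj : (ι : Type) → (ι → InfFormula) → InfFormula
  | ex : ℕ → InfFormula → InfFormula

/-- Satisfaction for `ℒ_{∞ω}` in `(M, ∈)`. -/
def InfSat (M : ZFSet.{0}) : InfFormula → (ℕ → ZFSet.{0}) → Prop
  | .eq i j, v => v i = v j
  | .mem i j, v => v i ∈ v j
  | .neg φ, v => ¬ InfSat M φ v
  | .conj ι f, v => ∀ i : ι, InfSat M (f i) v
  | .ex i φ, v => ∃ a, a ∈ M ∧ InfSat M φ (Function.update v i a)

/-- The logic `ℒ_{∞ω}`. -/
def LinftyOmega : AbstractLogic := ⟨InfFormula, InfSat⟩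

/-! Over a transitive set `M`, every `a ∈ M` is pinned down in `(M, ∈)` by an `ℒ_{∞ω}`-formula
`x = a`, built by `∈`-recursion: `x = a` iff `∀ y ∈ x, ⋁_{b ∈ a} y = b` and
`⋀_{b ∈ a} ∃ y ∈ x, y = b`. Disjunctions of these formulas define every subset of `M`, so
`Def_{ℒ_{∞ω}}(M) = 𝒫(M)`, and the hierarchy `L'_α` is the von Neumann hierarchy `V_α`. -/

open ZFSet

namespace AbstractLogic

variable (L : AbstractLogic)

theorem defSet_subset_powerset (M : ZFSet.{0}) : L.defSet M ⊆ M.powerset :=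
  fun _ hX => (ZFSet.mem_sep.mp hX).1

@[simp]
theorem hier_zero : L.hier 0 = ∅ := by
  rw [hier, hierFrom, Ordinal.limitRecOn_zero]

@[simp]
theorem hier_add_one (o : Ordinal.{0}) : L.hier (o + 1) = L.defSet (L.hier o) := by
  rw [hier, hierFrom, Ordinal.limitRecOn_add_one]; rfl

theorem mem_hier_of_isSuccLimit {o : Ordinal.{0}} (ho : Order.IsSuccLimit o) {x : ZFSet.{0}} :
    x ∈ L.hier o ↔ ∃ β < o, x ∈ L.hier β := by
  rw [hier, hierFrom, Ordinal.limitRecOn_limit _ _ _ _ ho]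
  simp only [ZFSet.mem_sUnion, ZFSet.mem_range]
  constructor
  · rintro ⟨_, ⟨i, rfl⟩, hx⟩
    exact ⟨_, ((Ordinal.ToType.mk (o := o)).symm i).2, hx⟩
  · rintro ⟨β, hβ, hx⟩
    exact ⟨_, ⟨Ordinal.ToType.mk ⟨β, hβ⟩, rfl⟩, by rwa [OrderIso.symm_apply_apply]⟩

theorem hier_eq_vonNeumann (h : ∀ M : ZFSet.{0}, M.IsTransitive → L.defSet M = M.powerset)
    (o : Ordinal.{0}) : L.hier o = V_ o := by
  induction o using Ordinal.limitRecOn with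
  | zero => rw [hier_zero, vonNeumann_zero]
  | add_one o ih => rw [hier_add_one, ih, h _ (isTransitive_vonNeumann o), vonNeumann_add_one]
  | limit o ho ih =>
    ext x
    rw [mem_hier_of_isSuccLimit L ho, mem_vonNeumann, ho.lt_iff_exists_lt]
    refine exists_congr fun β => and_congr_right fun hβ => ?_
    rw [ih β hβ, mem_vonNeumann]

theorem C_eq_univ_of_defSet_eq_powerset
    (h : ∀ M : ZFSet.{0}, M.IsTransitive → L.defSet M = M.powerset) : L.C = Set.univ :=
  Set.eq_univ_of_forall fun x =>
    let ⟨o, hx⟩ := exists_mem_vonNeumann x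
    ⟨o, (L.hier_eq_vonNeumann h o).symm ▸ hx⟩

end AbstractLogic


namespace InfFormula

def and (φ ψ : InfFormula) : InfFormula := .conj Bool fun b => bif b then φ else ψ

def iConj {ι : Type 1} [Small.{0} ι] (f : ι → InfFormula) : InfFormula :=
  .conj (Shrink ι) fun i => f ((equivShrink ι).symm i)

def iDisj {ι : Type 1} [Small.{0} ι] (f : ι → InfFormula) : InfFormula :=
  .neg (iConj fun i => .neg (f i))

def bEx (i j : ℕ) (φ : InfFormula) : InfFormula := .ex i (.and (.mem i j) φ)

def bAll (i j : ℕ) (φ : InfFormula) : InfFormula := .neg (.bEx i j (.neg φ))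

end InfFormula

open InfFormula

section InfSat

variable {M : ZFSet.{0}} {v : ℕ → ZFSet.{0}}

@[simp]
theorem infSat_and {φ ψ : InfFormula} : InfSat M (φ.and ψ) v ↔ InfSat M φ v ∧ InfSat M ψ v := by
  simp [InfFormula.and, InfSat, Bool.forall_bool, and_comm]

@[simp]
theorem infSat_iConj {ι : Type 1} [Small.{0} ι] {f : ι → InfFormula} :
    InfSat M (iConj f) v ↔ ∀ i, InfSat M (f i) v :=
  (equivShrink ι).symm.forall_congr_right (q := fun i => InfSat M (f i) v)

@[simp]
theorem infSat_iDisj {ι : Type 1} [Small.{0} ι] {f : ι → InfFormula} :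
    InfSat M (iDisj f) v ↔ ∃ i, InfSat M (f i) v := by
  simp [iDisj, InfSat]

theorem infSat_bEx {i j : ℕ} (hij : i ≠ j) {φ : InfFormula} :
    InfSat M (bEx i j φ) v ↔ ∃ a ∈ M, a ∈ v j ∧ InfSat M φ (Function.update v i a) := by
  simp [bEx, InfSat, Function.update_of_ne hij.symm]

theorem infSat_bAll {i j : ℕ} (hij : i ≠ j) {φ : InfFormula} :
    InfSat M (bAll i j φ) v ↔ ∀ a ∈ M, a ∈ v j → InfSat M φ (Function.update v i a) := by
  simp [bAll, InfSat, infSat_bEx hij]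

end InfSat

def eqFormula (a : ZFSet.{0}) (n : ℕ) : InfFormula :=
  (bAll (n + 1) n (iDisj fun b : a => eqFormula b (n + 1))).and
    (iConj fun b : a => bEx (n + 1) n (eqFormula b (n + 1)))
termination_by a
decreasing_by all_goals exact b.2

theorem infSat_eqFormula_iff {M : ZFSet.{0}} (hM : M.IsTransitive) {a : ZFSet.{0}} (ha : a ∈ M)
    {n : ℕ} {v : ℕ → ZFSet.{0}} (hv : v n ∈ M) : InfSat M (eqFormula a n) v ↔ v n = a := by
  induction a using ZFSet.inductionOn generalizing n v with
  | h a ih =>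
    have hn : n + 1 ≠ n := n.succ_ne_self
    have ih' : ∀ b ∈ a, ∀ y ∈ M,
        InfSat M (eqFormula b (n + 1)) (Function.update v (n + 1) y) ↔ y = b := fun b hb y hy => by
      simpa using ih b hb (hM.mem_trans hb ha) (n := n + 1) (v := Function.update v (n + 1) y)
        (by simpa)
    rw [eqFormula, infSat_and, infSat_bAll hn, infSat_iConj]
    simp only [infSat_iDisj, infSat_bEx hn]
    constructor
    · rintro ⟨hsub, hsup⟩
      ext y
      constructor
      · intro hy
        obtain ⟨⟨b, hb⟩, hyb⟩ := hsub y (hM.mem_trans hy hv) hy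
        rwa [(ih' b hb y (hM.mem_trans hy hv)).mp hyb]
      · intro hy
        obtain ⟨z, hzM, hz, hzy⟩ := hsup ⟨y, hy⟩
        rwa [← (ih' y hy z hzM).mp hzy]
    · rintro rfl
      exact ⟨fun y hyM hy => ⟨⟨y, hy⟩, (ih' y hy y hyM).mpr rfl⟩,
        fun ⟨b, hb⟩ => ⟨b, hM.mem_trans hb hv, hb, (ih' b hb b (hM.mem_trans hb hv)).mpr rfl⟩⟩

theorem defSet_linftyOmega {M : ZFSet.{0}} (hM : M.IsTransitive) :
    LinftyOmega.defSet M = M.powerset := by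
  refine (LinftyOmega.defSet_subset_powerset M).antisymm fun X hX => ?_
  have hXM := mem_powerset.mp hX
  refine mem_sep.mpr ⟨hX, iDisj fun b : X => eqFormula b 0, fun _ => ∅, fun _ => Or.inr rfl,
    fun a => ?_⟩
  simp only [LinftyOmega, infSat_iDisj]
  constructor
  · intro ha
    exact ⟨hXM ha, ⟨a, ha⟩, (infSat_eqFormula_iff hM (hXM ha) (hXM ha)).mpr rfl⟩
  · rintro ⟨haM, ⟨b, hb⟩, hab⟩
    obtain rfl : a = b := (infSat_eqFormula_iff hM (hXM hb) haM).mp hab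
    exact hb

/-- `C(ℒ_{∞ω}) = V`: replacing first-order logic by the
infinitary logic `ℒ_{∞ω}` in the definition of Gödel's constructible
hierarchy yields the whole universe `V` of sets. -/
theorem stmt_0 : LinftyOmega.C = Set.univ :=
  LinftyOmega.C_eq_univ_of_defSet_eq_powerset fun _ => defSet_linftyOmega

end
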